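/- arXiv:1805.00812 — 2 statements merged into one kernel-verified Lean document; each statement's English description precedes it below -/
import Mathlib

section
/- If a sequence of random vectors (X_1,...,X_n) is less than (Y_1,...,Y_n) in the supermodular order, then the sum X_1+...+X_n is less than Y_1+...+Y_n in the convex order. -/
open MeasureTheory ProbabilityTheory Filter Real

/-- A function `φ : ℝⁿ → ℝ` is supermodular if `φ(x ⊔ y) + φ(x ⊓ y) ≥ φ(x) + φ(y)`. -/
def Supermodular {n : ℕ} (φ : (Fin n → ℝ) → ℝ) : Prop :=
  ∀ x y : Fin n → ℝ, φ x + φ y ≤ φ (x ⊔ y) + φ (x ⊓ y)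

/-- Supermodular order on random vectors. -/
def SmOrder {Ω : Type*} [MeasurableSpace Ω] (μ : Measure Ω) {n : ℕ}
    (X Y : Ω → Fin n → ℝ) : Prop :=
  ∀ φ : (Fin n → ℝ) → ℝ, Supermodular φ →
    Integrable (fun ω => φ (X ω)) μ → Integrable (fun ω => φ (Y ω)) μ →
    ∫ ω, φ (X ω) ∂μ ≤ ∫ ω, φ (Y ω) ∂μ

/-- Convex order on real random variables. -/
def CxOrder {Ω : Type*} [MeasurableSpace Ω] (μ : Measure Ω) (X Y : Ω → ℝ) : Prop :=
  ∀ φ : ℝ → ℝ, ConvexOn ℝ Set.univ φ →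
    Integrable (fun ω => φ (X ω)) μ → Integrable (fun ω => φ (Y ω)) μ →
    ∫ ω, φ (X ω) ∂μ ≤ ∫ ω, φ (Y ω) ∂μ

/-!
For convex `φ`, the map `x ↦ φ (∑ i, x i)` is supermodular: the sums of `x ⊓ y` and `x ⊔ y`
have the same total as those of `x` and `y` but enclose them, so convexity of `φ` gives
`φ(Σx) + φ(Σy) ≤ φ(Σ(x ⊔ y)) + φ(Σ(x ⊓ y))`. Testing the supermodular order against these
functions is exactly the convex order of the sums.
-/

theorem ConvexOn.map_add_map_le_of_mem_Icc {𝕜 β : Type*} [Field 𝕜] [LinearOrder 𝕜]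
    [IsStrictOrderedRing 𝕜] [AddCommGroup β] [PartialOrder β] [IsOrderedAddMonoid β]
    [Module 𝕜 β] {s : Set 𝕜} {f : 𝕜 → β} (hf : ConvexOn 𝕜 s f) {x y a b : 𝕜}
    (hx : x ∈ s) (hy : y ∈ s) (ha : a ∈ Set.Icc x y) (hab : a + b = x + y) :
    f a + f b ≤ f x + f y := by
  obtain ⟨hxa, hay⟩ := ha
  rcases (hxa.trans hay).eq_or_lt with hxy | hxy
  · obtain rfl : a = x := le_antisymm (hxy ▸ hay) hxa
    obtain rfl : b = y := by linarith
    rfl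
  have hyx : y - x ≠ 0 := (sub_pos.mpr hxy).ne'
  set p := (y - a) / (y - x)
  set q := (a - x) / (y - x)
  have hp : 0 ≤ p := div_nonneg (sub_nonneg.mpr hay) (sub_pos.mpr hxy).le
  have hq : 0 ≤ q := div_nonneg (sub_nonneg.mpr hxa) (sub_pos.mpr hxy).le
  have hpq : p + q = 1 := by rw [← add_div, div_eq_one_iff_eq hyx]; ring
  have ha' : p • x + q • y = a := by simp only [smul_eq_mul, p, q]; field_simp; ring
  have hb' : q • x + p • y = b := by
    simp only [smul_eq_mul, p, q]; field_simp; linear_combination (x - y) * hab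
  calc f a + f b ≤ (p • f x + q • f y) + (q • f x + p • f y) := by
        gcongr
        · exact ha' ▸ hf.2 hx hy hp hq hpq
        · exact hb' ▸ hf.2 hx hy hq hp (by rwa [add_comm])
    _ = (p + q) • f x + (p + q) • f y := by module
    _ = f x + f y := by rw [hpq, one_smul, one_smul]

theorem ConvexOn.supermodular_comp_sum {n : ℕ} {φ : ℝ → ℝ} (hφ : ConvexOn ℝ Set.univ φ) :
    Supermodular (fun x : Fin n → ℝ => φ (∑ i, x i)) := by
  intro x y
  have hsum : (∑ i, (x ⊓ y) i) + ∑ i, (x ⊔ y) i = (∑ i, x i) + ∑ i, y i := by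
    simp only [← Finset.sum_add_distrib, Pi.inf_apply, Pi.sup_apply, min_add_max]
  have hx : ∑ i, x i ∈ Set.Icc (∑ i, (x ⊓ y) i) (∑ i, (x ⊔ y) i) :=
    ⟨Finset.sum_le_sum fun i _ => inf_le_left, Finset.sum_le_sum fun i _ => le_sup_left⟩
  have := hφ.map_add_map_le_of_mem_Icc trivial trivial hx (by linarith)
  linarith

theorem smOrder_implies_cxOrder_sum_general {Ω : Type*} [MeasurableSpace Ω]
    (μ : Measure Ω) {n : ℕ}
    (X Y : Ω → Fin n → ℝ) (h : SmOrder μ X Y) :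
    CxOrder μ (fun ω => ∑ i, X ω i) (fun ω => ∑ i, Y ω i) :=
  fun φ hφ => h (fun x => φ (∑ i, x i)) hφ.supermodular_comp_sum

/-- supermodular ordering of random vectors implies convex ordering of their sums. -/
theorem smOrder_implies_cxOrder_sum {Ω : Type*} [MeasurableSpace Ω]
    (μ : Measure Ω) [IsProbabilityMeasure μ] {n : ℕ}
    (X Y : Ω → Fin n → ℝ) (h : SmOrder μ X Y) :
    CxOrder μ (fun ω => ∑ i, X ω i) (fun ω => ∑ i, Y ω i) :=
  smOrder_implies_cxOrder_sum_general μ X Y h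
end

section
/- Define α(h) = e^{−2h}(1 − e^{−h})/2 and β(h) = e^{−2h}(1 + e^{−h})/2 for h ≥ 0. Then for all s, u, t with s < u < t (writing h₁ = u − s, h₂ = t − u, h = t − s), the Chapman–Kolmogorov-type relations α(h) = β(h₁)α(h₂) + α(h₁)β(h₂) and β(h) = α(h₁)α(h₂) + β(h₁)β(h₂) hold, and moreover α(h) ≥ 0, β(h) ≥ 0, α(h) + β(h) ≤ 1. -/
open MeasureTheory ProbabilityTheory Filter Real

noncomputable def alphaF (h : ℝ) : ℝ := Real.exp (-2 * h) * (1 - Real.exp (-h)) / 2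

noncomputable def betaF (h : ℝ) : ℝ := Real.exp (-2 * h) * (1 + Real.exp (-h)) / 2

/-- the Fréchet mixture coefficients `α, β` satisfy the
Chapman–Kolmogorov-type consistency relations, and are nonnegative with sum at most 1. -/
theorem frechet_mixture_consistency :
    (∀ s u t : ℝ, s < u → u < t →
      alphaF (t - s) = betaF (u - s) * alphaF (t - u) + alphaF (u - s) * betaF (t - u) ∧
      betaF (t - s) = alphaF (u - s) * alphaF (t - u) + betaF (u - s) * betaF (t - u)) ∧
    (∀ h : ℝ, 0 ≤ h → 0 ≤ alphaF h ∧ 0 ≤ betaF h ∧ alphaF h + betaF h ≤ 1) := by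
  constructor
  · intro s u t _ _
    have hts : t - s = (u - s) + (t - u) := by ring
    have h2 : (-2 : ℝ) * (t - s) = (-2 * (u - s)) + (-2 * (t - u)) := by ring
    have h1 : -(t - s) = (-(u - s)) + (-(t - u)) := by ring
    constructor <;>
    · simp only [alphaF, betaF, h2, h1, Real.exp_add]
      ring
  · intro h hh
    have h1 : Real.exp (-h) ≤ 1 := Real.exp_le_one_iff.mpr (by linarith)
    have h2 : Real.exp (-2 * h) ≤ 1 := Real.exp_le_one_iff.mpr (by linarith)
    have h3 : (0:ℝ) < Real.exp (-h) := Real.exp_pos _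
    have h4 : (0:ℝ) < Real.exp (-2 * h) := Real.exp_pos _
    refine ⟨?_, ?_, ?_⟩ <;> simp only [alphaF, betaF] <;> nlinarith
end
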